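/- For the tribonacci position sequences A, B, C and counting functions z_A, z_B, z_C (z_X(n) = number of j ≤ n with t(j) equal to the letter associated with X), one has z_B(A(k)) = B(k) + 1, z_A(C(k)) = B(k) + 1, z_B(C(k)) = A(k) + 1, and z_C(A(k)) = A(k) − B(k) − (k+1) for all k ≥ 0. -/

import Mathlib

def sigmaW : ℕ → List ℕ
  | 0 => [0, 1]
  | 1 => [0, 2]
  | _ => [0]

def sigmaL (w : List ℕ) : List ℕ := w.flatMap sigmaW

/-- The infinite tribonacci word t = 0,1,0,2,0,1,0,0,1,0,2,...,
the fixed point of the substitution starting from 0. -/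
def t (n : ℕ) : ℕ := (sigmaL^[n + 1] [0]).getD n 0

/-- A(n): position of the (n+1)-st occurrence of the letter 1 in t. -/
noncomputable def A (n : ℕ) : ℕ := Nat.nth (fun k => t k = 1) n

/-- B(n): position of the (n+1)-st occurrence of the letter 0 in t. -/
noncomputable def B (n : ℕ) : ℕ := Nat.nth (fun k => t k = 0) n

/-- C(n): position of the (n+1)-st occurrence of the letter 2 in t. -/
noncomputable def C (n : ℕ) : ℕ := Nat.nth (fun k => t k = 2) n

/-!
Since `t` is a fixed point of `σ`, it is the concatenation of the blocks `σ(t 0) σ(t 1) …`;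
`blockStart j` is the position where `σ(t j)` begins. Every block starts with `0`, and
`0 ↦ 01`, `1 ↦ 02`, `2 ↦ 0`, so the `0`s of `t` sit exactly at the block starts, the `1`s right
after the blocks of `0`s and the `2`s right after the blocks of `1`s. Counting occurrences of a
letter below a position therefore amounts to counting blocks of a letter, which gives
`B k = blockStart k`, `A k = blockStart (B k) + 1`, `C k = blockStart (A k) + 1` and the
formulas for `z_A`, `z_B`. The one for `z_C` follows because `z_A + z_B + z_C` counts all positions.
-/

section CountImage

variable {p q : ℕ → Prop} [DecidablePred p] [DecidablePred q] {f : ℕ → ℕ}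

lemma Nat.count_eq_count_of_strictMono (hf : StrictMono f)
    (hpq : ∀ m, p m ↔ ∃ j, q j ∧ f j = m) {n M : ℕ} (hnM : ∀ j, f j < n ↔ j < M) :
    Nat.count p n = Nat.count q M := by
  have himage : (Finset.range n).filter p = ((Finset.range M).filter q).image f := by
    ext m
    simp only [Finset.mem_filter, Finset.mem_range, Finset.mem_image, hpq]
    constructor
    · rintro ⟨hmn, j, hqj, rfl⟩
      exact ⟨j, ⟨(hnM j).mp hmn, hqj⟩, rfl⟩
    · rintro ⟨j, ⟨hjM, hqj⟩, rfl⟩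
      exact ⟨(hnM j).mpr hjM, j, hqj, rfl⟩
  rw [Nat.count_eq_card_filter_range, Nat.count_eq_card_filter_range, himage,
    Finset.card_image_of_injective _ hf.injective]

lemma Nat.count_apply_eq_count_of_strictMono (hf : StrictMono f)
    (hpq : ∀ m, p m ↔ ∃ j, q j ∧ f j = m) (N : ℕ) :
    Nat.count p (f N) = Nat.count q N :=
  Nat.count_eq_count_of_strictMono hf hpq fun _ => hf.lt_iff_lt

lemma Nat.count_eq_count_succ_of_strictMono (hf : StrictMono f)
    (hpq : ∀ m, p m ↔ ∃ j, q j ∧ f j = m) {n N : ℕ} (hlo : f N < n)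
    (hhi : n ≤ f (N + 1)) :
    Nat.count p n = Nat.count q (N + 1) :=
  Nat.count_eq_count_of_strictMono hf hpq fun j => by
    have hjN := hf.le_iff_le (a := j) (b := N)
    have hNj := hf.le_iff_le (a := N + 1) (b := j)
    omega

end CountImage

namespace Tribonacci

lemma sigmaL_append (u v : List ℕ) : sigmaL (u ++ v) = sigmaL u ++ sigmaL v :=
  List.flatMap_append

lemma sigmaW_of_le_one {a : ℕ} (ha : a ≤ 1) : sigmaW a = [0, a + 1] := by
  interval_cases a <;> rfl

lemma sigmaW_of_two_le {a : ℕ} (ha : 2 ≤ a) : sigmaW a = [0] := by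
  obtain ⟨b, rfl⟩ := Nat.exists_eq_add_of_le' ha
  rfl

lemma length_sigmaW_pos (a : ℕ) : 0 < (sigmaW a).length := by
  rcases le_or_gt a 1 with ha | ha
  · simp [sigmaW_of_le_one ha]
  · simp [sigmaW_of_two_le ha]

def iterSigma (n : ℕ) : List ℕ := sigmaL^[n] [0]

lemma iterSigma_succ (n : ℕ) : iterSigma (n + 1) = sigmaL (iterSigma n) :=
  Function.iterate_succ_apply' _ _ _

lemma iterSigma_prefix_succ (n : ℕ) : iterSigma n <+: iterSigma (n + 1) := by
  induction n with
  | zero => exact ⟨[1], rfl⟩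
  | succ n ih =>
    obtain ⟨r, hr⟩ := ih
    rw [iterSigma_succ, iterSigma_succ, ← hr, sigmaL_append]
    exact List.prefix_append _ _

lemma iterSigma_prefix_of_le {m n : ℕ} (h : m ≤ n) : iterSigma m <+: iterSigma n := by
  induction n, h using Nat.le_induction with
  | base => exact List.prefix_refl _
  | succ n _ ih => exact ih.trans (iterSigma_prefix_succ n)

lemma length_le_length_sigmaL (w : List ℕ) : w.length ≤ (sigmaL w).length := by
  induction w with
  | nil => simp [sigmaL]
  | cons a w ih =>
    have := length_sigmaW_pos a
    simp only [sigmaL, List.flatMap_cons, List.length_append, List.length_cons] at ih ⊢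
    omega

lemma exists_iterSigma_eq_cons (n : ℕ) : ∃ r, iterSigma n = 0 :: r := by
  obtain ⟨r, hr⟩ := iterSigma_prefix_of_le (Nat.zero_le n)
  exact ⟨r, hr.symm⟩

lemma lt_length_iterSigma (n : ℕ) : n < (iterSigma n).length := by
  induction n with
  | zero => simp [iterSigma]
  | succ n ih =>
    obtain ⟨r, hr⟩ := exists_iterSigma_eq_cons n
    have := length_le_length_sigmaL r
    rw [hr] at ih
    rw [iterSigma_succ, hr]
    simp only [sigmaL, List.flatMap_cons, List.length_append, List.length_cons] at ih this ⊢
    simp only [sigmaW, List.length_cons, List.length_nil]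
    omega

def tPrefix (n : ℕ) : List ℕ := (List.range n).map t

@[simp] lemma length_tPrefix (n : ℕ) : (tPrefix n).length = n := by simp [tPrefix]

@[simp] lemma getElem_tPrefix {n i : ℕ} (hi : i < (tPrefix n).length) : (tPrefix n)[i] = t i := by
  simp [tPrefix]

lemma tPrefix_succ (n : ℕ) : tPrefix (n + 1) = tPrefix n ++ [t n] := by
  simp [tPrefix, List.range_succ]

lemma tPrefix_eq_take {m n : ℕ} (h : m ≤ n) : tPrefix m = (tPrefix n).take m := by
  rw [tPrefix, tPrefix, ← List.map_take, List.take_range, min_eq_left h]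

lemma eq_tPrefix_of_prefix {w : List ℕ} {n : ℕ} (h : w <+: tPrefix n) : w = tPrefix w.length := by
  rw [List.prefix_iff_eq_take.mp h, List.length_take, length_tPrefix,
    tPrefix_eq_take (min_le_right _ _), min_eq_left (by simpa using h.length_le)]

lemma t_eq_getElem_iterSigma {m i : ℕ} (hi : i < (iterSigma m).length) :
    t i = (iterSigma m)[i] := by
  have hi' : i < (iterSigma (i + 1)).length :=
    (lt_length_iterSigma (i + 1)).trans' (Nat.lt_succ_self i)
  have ht : t i = (iterSigma (i + 1))[i] := by
    rw [t, ← iterSigma, List.getD_eq_getElem?_getD, List.getElem?_eq_getElem hi', Option.getD_some]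
  rw [ht, (iterSigma_prefix_of_le (le_max_left m (i + 1))).getElem hi,
    (iterSigma_prefix_of_le (le_max_right m (i + 1))).getElem hi']

lemma iterSigma_eq_tPrefix (m : ℕ) : iterSigma m = tPrefix (iterSigma m).length :=
  List.ext_getElem (length_tPrefix _).symm fun i hi _ => by
    rw [getElem_tPrefix, t_eq_getElem_iterSigma hi]

def blockStart (n : ℕ) : ℕ := (sigmaL (tPrefix n)).length

lemma tPrefix_prefix_iterSigma (n : ℕ) : tPrefix n <+: iterSigma n := by
  rw [iterSigma_eq_tPrefix n, tPrefix_eq_take (lt_length_iterSigma n).le]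
  exact List.take_prefix _ _

lemma sigmaL_tPrefix (n : ℕ) : sigmaL (tPrefix n) = tPrefix (blockStart n) :=
  eq_tPrefix_of_prefix (n := (iterSigma (n + 1)).length) <| by
    rw [← iterSigma_eq_tPrefix, iterSigma_succ]
    exact (tPrefix_prefix_iterSigma n).flatMap sigmaW

lemma tPrefix_blockStart_succ (n : ℕ) :
    tPrefix (blockStart (n + 1)) = tPrefix (blockStart n) ++ sigmaW (t n) := by
  rw [← sigmaL_tPrefix, ← sigmaL_tPrefix, tPrefix_succ, sigmaL_append]
  simp [sigmaL]

lemma blockStart_succ (n : ℕ) : blockStart (n + 1) = blockStart n + (sigmaW (t n)).length := by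
  simpa using congrArg List.length (tPrefix_blockStart_succ n)

lemma blockStart_strictMono : StrictMono blockStart :=
  strictMono_nat_of_lt_succ fun n => by
    rw [blockStart_succ]
    exact Nat.lt_add_of_pos_right (length_sigmaW_pos _)

lemma t_blockStart_add {n i : ℕ} (hi : i < (sigmaW (t n)).length) :
    t (blockStart n + i) = (sigmaW (t n))[i] := by
  have hlt : blockStart n + i < (tPrefix (blockStart (n + 1))).length := by
    rw [length_tPrefix, blockStart_succ]
    omega
  rw [← getElem_tPrefix hlt]
  simp only [tPrefix_blockStart_succ]
  rw [List.getElem_append_right (by simp)]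
  simp

lemma t_blockStart (n : ℕ) : t (blockStart n) = 0 := by
  have := t_blockStart_add (length_sigmaW_pos (t n))
  rcases le_or_gt (t n) 1 with h | h
  · simpa [sigmaW_of_le_one h] using this
  · simpa [sigmaW_of_two_le h] using this

lemma t_blockStart_add_one {n c : ℕ} (hc : c ≤ 1) (hn : t n = c) :
    t (blockStart n + 1) = c + 1 := by
  subst hn
  have := t_blockStart_add (n := n) (i := 1) (by simp [sigmaW_of_le_one hc])
  simpa [sigmaW_of_le_one hc] using this

lemma blockStart_succ_of_le_one {n : ℕ} (h : t n ≤ 1) :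
    blockStart (n + 1) = blockStart n + 2 := by
  simp [blockStart_succ, sigmaW_of_le_one h]

lemma blockStart_succ_of_two_le {n : ℕ} (h : 2 ≤ t n) :
    blockStart (n + 1) = blockStart n + 1 := by
  simp [blockStart_succ, sigmaW_of_two_le h]

lemma exists_blockStart_eq_or_add_one_eq (m : ℕ) :
    ∃ j, blockStart j = m ∨ (t j ≤ 1 ∧ blockStart j + 1 = m) := by
  induction m with
  | zero => exact ⟨0, Or.inl rfl⟩
  | succ m ih =>
    obtain ⟨j, rfl | ⟨hj, rfl⟩⟩ := ih
    · rcases le_or_gt (t j) 1 with hj | hj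
      · exact ⟨j, Or.inr ⟨hj, rfl⟩⟩
      · exact ⟨j + 1, Or.inl (blockStart_succ_of_two_le hj)⟩
    · exact ⟨j + 1, Or.inl (blockStart_succ_of_le_one hj)⟩

lemma t_eq_zero_iff (m : ℕ) : t m = 0 ↔ ∃ j, blockStart j = m := by
  refine ⟨fun hm => ?_, fun ⟨j, hj⟩ => hj ▸ t_blockStart j⟩
  obtain ⟨j, hj | ⟨hj, rfl⟩⟩ := exists_blockStart_eq_or_add_one_eq m
  · exact ⟨j, hj⟩
  · simp [t_blockStart_add_one hj rfl] at hm

lemma t_eq_succ_iff {c : ℕ} (hc : c ≤ 1) (m : ℕ) :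
    t m = c + 1 ↔ ∃ j, t j = c ∧ blockStart j + 1 = m := by
  refine ⟨fun hm => ?_, ?_⟩
  · obtain ⟨j, rfl | ⟨hj, rfl⟩⟩ := exists_blockStart_eq_or_add_one_eq m
    · simp [t_blockStart] at hm
    · exact ⟨j, by rw [t_blockStart_add_one hj rfl] at hm; omega, rfl⟩
  · rintro ⟨j, hj, rfl⟩
    exact t_blockStart_add_one hc hj

lemma t_le_two (m : ℕ) : t m ≤ 2 := by
  obtain ⟨j, rfl | ⟨hj, rfl⟩⟩ := exists_blockStart_eq_or_add_one_eq m
  · simp [t_blockStart]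
  · rw [t_blockStart_add_one hj rfl]
    omega

lemma count_zero_eq_of_window {N n : ℕ} (hlo : blockStart N < n)
    (hhi : n ≤ blockStart (N + 1)) :
    Nat.count (t · = 0) n = N + 1 := by
  simpa using Nat.count_eq_count_succ_of_strictMono (q := fun _ => True) blockStart_strictMono
    (fun m => by simpa using t_eq_zero_iff m) hlo hhi

lemma count_zero_blockStart (N : ℕ) : Nat.count (t · = 0) (blockStart N) = N := by
  simpa using Nat.count_apply_eq_count_of_strictMono (q := fun _ => True) blockStart_strictMono
    (fun m => by simpa using t_eq_zero_iff m) N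

lemma count_succ_eq_of_window {c : ℕ} (hc : c ≤ 1) {N n : ℕ} (hlo : blockStart N + 1 < n)
    (hhi : n ≤ blockStart (N + 1) + 1) :
    Nat.count (t · = c + 1) n = Nat.count (t · = c) (N + 1) :=
  Nat.count_eq_count_succ_of_strictMono (f := (blockStart · + 1))
    (blockStart_strictMono.add_const 1) (t_eq_succ_iff hc) hlo hhi

lemma count_succ_blockStart_add_one {c : ℕ} (hc : c ≤ 1) (N : ℕ) :
    Nat.count (t · = c + 1) (blockStart N + 1) = Nat.count (t · = c) N :=
  Nat.count_apply_eq_count_of_strictMono (f := (blockStart · + 1))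
    (blockStart_strictMono.add_const 1) (t_eq_succ_iff hc) N

lemma B_eq_blockStart (k : ℕ) : B k = blockStart k := by
  have h := Nat.nth_count (p := (t · = 0)) (t_blockStart k)
  rwa [count_zero_blockStart] at h

lemma t_B (k : ℕ) : t (B k) = 0 := by
  rw [B_eq_blockStart]
  exact t_blockStart k

lemma count_zero_B (k : ℕ) : Nat.count (t · = 0) (B k) = k := by
  rw [B_eq_blockStart, count_zero_blockStart]

lemma A_eq_blockStart_B (k : ℕ) : A k = blockStart (B k) + 1 := by
  have h := Nat.nth_count (p := (t · = 0 + 1)) (t_blockStart_add_one zero_le_one (t_B k))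
  rwa [count_succ_blockStart_add_one (c := 0) zero_le_one, count_zero_B] at h

lemma t_A (k : ℕ) : t (A k) = 1 := by
  rw [A_eq_blockStart_B, t_blockStart_add_one zero_le_one (t_B k)]

lemma count_one_A (k : ℕ) : Nat.count (t · = 1) (A k) = k := by
  rw [A_eq_blockStart_B, count_succ_blockStart_add_one (c := 0) zero_le_one, count_zero_B]

lemma C_eq_blockStart_A (k : ℕ) : C k = blockStart (A k) + 1 := by
  have h := Nat.nth_count (p := (t · = 1 + 1)) (t_blockStart_add_one le_rfl (t_A k))
  rwa [count_succ_blockStart_add_one (c := 1) le_rfl, count_one_A] at h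

lemma count_zero_add_count_one_add_count_two (n : ℕ) :
    Nat.count (t · = 0) n + Nat.count (t · = 1) n + Nat.count (t · = 2) n = n := by
  induction n with
  | zero => simp
  | succ n ih =>
    simp only [Nat.count_succ]
    have := t_le_two n
    interval_cases h : t n <;> simp <;> omega

end Tribonacci

open Tribonacci

/-- z_B(A(k)) = B(k) + 1, z_A(C(k)) = B(k) + 1, z_B(C(k)) = A(k) + 1, and
z_C(A(k)) = A(k) − B(k) − (k+1), where z_X(n) counts indices j ≤ n with t(j) the
letter associated to X (1 for A, 0 for B, 2 for C). -/
theorem z_comp_formulas (k : ℕ) :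
    ((Finset.range (A k + 1)).filter (fun j => t j = 0)).card = B k + 1 ∧
    ((Finset.range (C k + 1)).filter (fun j => t j = 1)).card = B k + 1 ∧
    ((Finset.range (C k + 1)).filter (fun j => t j = 0)).card = A k + 1 ∧
    ((((Finset.range (A k + 1)).filter (fun j => t j = 2)).card : ℤ)
      = (A k : ℤ) - B k - (k + 1)) := by
  simp only [← Nat.count_eq_card_filter_range]
  have hA := A_eq_blockStart_B k
  have hC := C_eq_blockStart_A k
  have hB_lt := blockStart_strictMono (Nat.lt_add_one (B k))
  have hA_lt := blockStart_strictMono (Nat.lt_add_one (A k))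
  have zB_A : Nat.count (t · = 0) (A k + 1) = B k + 1 :=
    count_zero_eq_of_window (by omega)
      (by rw [blockStart_succ_of_le_one (t_B k ▸ zero_le_one)]; omega)
  have zB_C : Nat.count (t · = 0) (C k + 1) = A k + 1 :=
    count_zero_eq_of_window (by omega) (by rw [blockStart_succ_of_le_one (t_A k).le]; omega)
  have zA_C : Nat.count (t · = 1) (C k + 1) = B k + 1 := by
    rw [← zB_A]
    exact count_succ_eq_of_window (c := 0) zero_le_one (N := A k) (by omega) (by omega)
  have zA_A : Nat.count (t · = 1) (A k + 1) = k + 1 :=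
    calc Nat.count (t · = 1) (A k + 1)
        = Nat.count (t · = 0) (B k + 1) :=
          count_succ_eq_of_window (c := 0) zero_le_one (N := B k) (by omega) (by omega)
      _ = k + 1 := by rw [Nat.count_succ, count_zero_B, if_pos (t_B k)]
  have hsum := count_zero_add_count_one_add_count_two (A k + 1)
  exact ⟨zB_A, zA_C, zB_C, by omega⟩
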